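/- For every integer n ≥ 3 and all homogeneous elements v₁,…,v_n ∈ V, the following identity holds: Φ_n(v₁,…,v_n) := ∑_{k+l=n+1, k,l≥2} ∑_{j=0}^{k−1} (−1)^r λ_k(v₁,…,v_j, λ_l(v_{j+1},…,v_{j+l}), v_{j+l+1},…,v_n) = 0, where r = l(|v₁|+⋯+|v_j|) + j(l−1) + (k−1)l (signs taken according to r mod 2, with the empty parity sum for j = 0 equal to 0). -/

import Mathlib

open Finset

/-- The sign `(-1)^x` for a parity `x : ZMod 2`, valued in a ring `A`. -/
def sgn {A : Type*} [Ring A] (x : ZMod 2) : A := (-1 : A) ^ x.val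

/-- The sum of the first `j` parities, `|v₁| + ⋯ + |v_j|`. -/
def psum (p : ℕ → ZMod 2) (j : ℕ) : ZMod 2 := ∑ i ∈ Finset.range j, p i

/-- `Qλ_n`, with the convention `Qλ₁ := -Id`. -/
def Qlam {A : Type*} [Neg A] (Q : A → A)
    (lam : ℕ → (ℕ → A) → (ℕ → ZMod 2) → A) :
    ℕ → (ℕ → A) → (ℕ → ZMod 2) → A
  | 1, v, _ => -(v 0)
  | n, v, p => Q (lam n v p)

/-- The tuple obtained from `v` by replacing the block `v_{j+1}, …, v_{j+l}`
of length `l` by the single element `x` (0-indexed: `x` sits at slot `j`). -/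
def insE {A : Type*} (v : ℕ → A) (j l : ℕ) (x : A) : ℕ → A :=
  fun i => if i < j then v i else if i = j then x else v (i + l - 1)

/-- The corresponding tuple of parities, where the inserted element has parity `q`. -/
def insP (p : ℕ → ZMod 2) (j l : ℕ) (q : ZMod 2) : ℕ → ZMod 2 :=
  fun i => if i < j then p i else if i = j then q else p (i + l - 1)

/-- `Φ_n(v₁,…,v_n) = ∑_{k+l=n+1, k,l≥2} ∑_{j=0}^{k-1} (-1)^r
λ_k(v₁,…,v_j, λ_l(v_{j+1},…,v_{j+l}), v_{j+l+1},…,v_n)`,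
with `r = l(|v₁|+⋯+|v_j|) + j(l-1) + (k-1)l`; the inserted element
`λ_l(v_{j+1},…,v_{j+l})` is homogeneous of parity `l + |v_{j+1}| + ⋯ + |v_{j+l}|`. -/
def Phi {A : Type*} [Ring A] (lam : ℕ → (ℕ → A) → (ℕ → ZMod 2) → A)
    (n : ℕ) (v : ℕ → A) (p : ℕ → ZMod 2) : A :=
  ∑ k ∈ Finset.Icc 2 (n - 1), ∑ j ∈ Finset.range k,
    sgn (((n + 1 - k : ℕ) : ZMod 2) * psum p j
        + (j : ZMod 2) * (((n + 1 - k : ℕ) : ZMod 2) - 1)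
        + ((k : ZMod 2) - 1) * ((n + 1 - k : ℕ) : ZMod 2)) *
      lam k
        (insE v j (n + 1 - k)
          (lam (n + 1 - k) (fun i => v (j + i)) (fun i => p (j + i))))
        (insP p j (n + 1 - k)
          (((n + 1 - k : ℕ) : ZMod 2) + ∑ i ∈ Finset.range (n + 1 - k), p (j + i)))

/-!
Expand the outer `λ_k` of every summand of `Φ_n` by its defining recursion. The nested
`λ_l(v_{j+1},…,v_{j+l})` then sits either in the right factor `Qλ_{k-a}` (when `a ≤ j`) or in
the left factor `Qλ_a` (when `a > j`). Regrouping, the inner sums are again of the shape of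
`Φ_m` for `m < n`, with `Qλ` instead of `λ`; the extra term with outer arity `1` contributes
`-λ_m`, so they equal `QΦ_m - λ_m`. The terms `±Qλ_a · λ_{n-a}` and `±λ_m · Qλ_{n-m}` left over
cancel: expanding `λ` once more, the products `Qλ_a · Qλ_b · Qλ_c` occur twice with opposite
signs, by associativity. Hence `Φ_n` is a combination of the `QΦ_m` with `m < n`, and strong
induction on `n` gives `Φ_n = 0`.
-/

section Sign
variable {A : Type*} [Ring A]

lemma sgn_zero : (sgn 0 : A) = 1 := pow_zero _

lemma sgn_one : (sgn 1 : A) = -1 := pow_one _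

lemma sgn_add (x y : ZMod 2) : (sgn (x + y) : A) = sgn x * sgn y := by
  rw [sgn, sgn, sgn, ZMod.val_add, ← pow_add, neg_one_pow_eq_pow_mod_two (x.val + y.val)]

lemma sgn_eq_one_or_neg_one (x : ZMod 2) : (sgn x : A) = 1 ∨ (sgn x : A) = -1 := by
  fin_cases x
  exacts [.inl sgn_zero, .inr sgn_one]

lemma sgn_commute (x : ZMod 2) (a : A) : Commute (sgn x) a :=
  (Commute.neg_one_left a).pow_left _

lemma AddMonoidHom.map_sgn_mul (Q : A →+ A) (x : ZMod 2) (a : A) :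
    Q (sgn x * a) = sgn x * Q a := by
  rcases sgn_eq_one_or_neg_one (A := A) x with h | h <;> simp [h]

end Sign

lemma psum_add (p : ℕ → ZMod 2) (a b : ℕ) :
    psum p (a + b) = psum p a + psum (fun i => p (a + i)) b :=
  sum_range_add p a b

lemma psum_congr {p p' : ℕ → ZMod 2} {k : ℕ} (h : ∀ i < k, p i = p' i) :
    psum p k = psum p' k :=
  sum_congr rfl fun i hi => h i (mem_range.mp hi)

lemma insE_shift {A : Type*} (v : ℕ → A) (a j l : ℕ) (x : A) :
    (fun i => insE v (a + j) l x (a + i)) = insE (fun i => v (a + i)) j l x := by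
  funext i
  simp only [insE]
  split_ifs <;> first | rfl | omega | exact congrArg v (by omega)

lemma insP_shift (p : ℕ → ZMod 2) (a j l : ℕ) (q : ZMod 2) :
    (fun i => insP p (a + j) l q (a + i)) = insP (fun i => p (a + i)) j l q :=
  insE_shift p a j l q

lemma insE_of_lt {A : Type*} (v : ℕ → A) {j i : ℕ} (l : ℕ) (x : A) (h : j < i) :
    insE v j l x i = v (i + l - 1) := by
  rw [insE, if_neg (by omega), if_neg (by omega)]

lemma insP_of_lt (p : ℕ → ZMod 2) {j i : ℕ} (l : ℕ) (q : ZMod 2) (h : j < i) :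
    insP p j l q i = p (i + l - 1) :=
  insE_of_lt p l q h

lemma psum_insP_of_le (p : ℕ → ZMod 2) {j a : ℕ} (l : ℕ) (q : ZMod 2) (h : a ≤ j) :
    psum (insP p j l q) a = psum p a :=
  psum_congr fun i hi => if_pos (by omega)

lemma psum_insP_of_lt (p : ℕ → ZMod 2) {j a l : ℕ} (hja : j < a) (hl : 1 ≤ l) :
    psum (insP p j l ((l : ZMod 2) + ∑ i ∈ range l, p (j + i))) a
      = l + psum p (a + l - 1) := by
  obtain ⟨t, rfl⟩ : ∃ t, a = j + 1 + t := ⟨a - j - 1, by omega⟩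
  have htail : ∀ i ∈ range t, insP p j l ((l : ZMod 2) + ∑ i ∈ range l, p (j + i)) (j + 1 + i)
      = p (j + l + i) := fun i _ => (insP_of_lt p l _ (by omega)).trans (congrArg p (by omega))
  rw [show j + 1 + t + l - 1 = j + l + t by omega, psum_add, psum_add _ j 1, psum_add p (j + l),
    psum_add p j l, psum_insP_of_le _ _ _ le_rfl]
  unfold psum
  rw [sum_range_one, sum_congr rfl htail]
  simp only [insP, add_zero, lt_irrefl, if_false, if_true]
  ring

def recSign (m k : ℕ) (p : ℕ → ZMod 2) : ZMod 2 :=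
  (k : ZMod 2) + (((m - k : ℕ) : ZMod 2) - 1) * psum p k

def phiSign (n k j : ℕ) (p : ℕ → ZMod 2) : ZMod 2 :=
  ((n + 1 - k : ℕ) : ZMod 2) * psum p j
    + (j : ZMod 2) * (((n + 1 - k : ℕ) : ZMod 2) - 1)
    + ((k : ZMod 2) - 1) * ((n + 1 - k : ℕ) : ZMod 2)

def insLam {A : Type*} (lam : ℕ → (ℕ → A) → (ℕ → ZMod 2) → A) (n k j : ℕ) (v : ℕ → A)
    (p : ℕ → ZMod 2) : ℕ → A :=
  insE v j (n + 1 - k) (lam (n + 1 - k) (fun i => v (j + i)) (fun i => p (j + i)))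

def insLamPar (n k j : ℕ) (p : ℕ → ZMod 2) : ℕ → ZMod 2 :=
  insP p j (n + 1 - k) (((n + 1 - k : ℕ) : ZMod 2) + ∑ i ∈ range (n + 1 - k), p (j + i))

section Recursion
variable {A : Type*} [Ring A] (Q : A → A) (lam : ℕ → (ℕ → A) → (ℕ → ZMod 2) → A)

/-- The recursion defining `λ_m`, extended to `m = 2`, where it reads `λ₂(v₁,v₂) = v₁·v₂`. -/
def LamRecursion : Prop :=
  ∀ m, 2 ≤ m → ∀ (v : ℕ → A) (p : ℕ → ZMod 2),
    lam m v p = -∑ k ∈ Icc 1 (m - 1), sgn (recSign m k p) *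
      (Qlam Q lam k v p * Qlam Q lam (m - k) (fun i => v (k + i)) (fun i => p (k + i)))

lemma Qlam_one (v : ℕ → A) (p : ℕ → ZMod 2) : Qlam Q lam 1 v p = -v 0 := rfl

lemma Qlam_of_two_le {m : ℕ} (hm : 2 ≤ m) (v : ℕ → A) (p : ℕ → ZMod 2) :
    Qlam Q lam m v p = Q (lam m v p) := by
  obtain ⟨m, rfl⟩ := Nat.exists_eq_add_of_le' hm
  rfl

lemma lamRecursion_of_two_of_three_le
    (hlam2 : ∀ (v : ℕ → A) (p : ℕ → ZMod 2), lam 2 v p = v 0 * v 1)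
    (hlamrec : ∀ n, 3 ≤ n → ∀ (v : ℕ → A) (p : ℕ → ZMod 2),
      lam n v p =
        -∑ k ∈ Icc 1 (n - 1), sgn ((k : ZMod 2) + (((n - k : ℕ) : ZMod 2) - 1) * psum p k) *
          (Qlam Q lam k v p * Qlam Q lam (n - k) (fun i => v (k + i)) (fun i => p (k + i)))) :
    LamRecursion Q lam := by
  intro m hm v p
  rcases (show m = 2 ∨ 3 ≤ m by omega) with rfl | h3
  · simp [hlam2, recSign, Qlam_one, sgn_one]
  · exact hlamrec m h3 v p

variable {Q lam}

lemma LamRecursion.Qlam_congr (hrec : LamRecursion Q lam) {a : ℕ} (ha : 1 ≤ a)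
    {w w' : ℕ → A} {q q' : ℕ → ZMod 2} (hw : ∀ i < a, w i = w' i) (hq : ∀ i < a, q i = q' i) :
    Qlam Q lam a w q = Qlam Q lam a w' q' := by
  induction a using Nat.strong_induction_on generalizing w w' q q' with
  | _ a IH =>
  rcases (show a = 1 ∨ 2 ≤ a by omega) with rfl | ha2
  · rw [Qlam_one, Qlam_one, hw 0 one_pos]
  rw [Qlam_of_two_le Q lam ha2, Qlam_of_two_le Q lam ha2, hrec a ha2, hrec a ha2]
  congr 2
  refine sum_congr rfl fun k hk => ?_
  rw [mem_Icc] at hk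
  rw [recSign, recSign, psum_congr fun i hi => hq i (by omega),
    IH k (by omega) hk.1 (fun i hi => hw i (by omega)) (fun i hi => hq i (by omega)),
    IH (a - k) (by omega) (by omega) (fun i hi => hw (k + i) (by omega))
      (fun i hi => hq (k + i) (by omega))]

end Recursion

section Reindex
variable {M : Type*} [AddCommMonoid M]

lemma sum_sum_sum_eq_sum_sigma {α β γ : Type*} (s : Finset α) (t : α → Finset β)
    (u : α → β → Finset γ) (f : α → β → γ → M) :
    ∑ x ∈ s, ∑ y ∈ t x, ∑ z ∈ u x y, f x y z
      = ∑ w ∈ s.sigma fun x => (t x).sigma (u x), f w.1 w.2.1 w.2.2 :=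
  (sum_congr rfl fun x _ => sum_sigma' (t x) (u x) (f x)).trans
    (sum_sigma' s (fun x => (t x).sigma (u x)) fun x w => f x w.1 w.2)

lemma sum_Icc_range_Ioc_zero_eq (n : ℕ) (f : ℕ → ℕ → ℕ → M) :
    ∑ k ∈ Icc 2 (n - 1), ∑ j ∈ range k, ∑ a ∈ Ioc 0 j, f k j a
      = ∑ a ∈ Icc 1 (n - 2), ∑ k ∈ Icc 1 (n - a - 1), ∑ j ∈ range k, f (a + k) (a + j) a := by
  rw [sum_sum_sum_eq_sum_sigma, sum_sum_sum_eq_sum_sigma]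
  refine sum_nbij' (fun w => ⟨w.2.2, w.1 - w.2.2, w.2.1 - w.2.2⟩)
    (fun w => ⟨w.1 + w.2.1, w.1 + w.2.2, w.1⟩) ?_ ?_ ?_ ?_ ?_ <;>
    rintro ⟨k, j, a⟩ h <;>
    simp only [mem_sigma, mem_Icc, mem_range, mem_Ioc, Sigma.mk.injEq, heq_eq_eq, and_true,
      true_and] at h ⊢
  all_goals first | omega | (congr 1 <;> omega)

lemma sum_Icc_range_Ioc_eq (n : ℕ) (f : ℕ → ℕ → ℕ → M) :
    ∑ k ∈ Icc 2 (n - 1), ∑ j ∈ range k, ∑ a ∈ Ioc j (k - 1), f k j a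
      = ∑ m ∈ Icc 2 (n - 1), ∑ a ∈ Icc 1 (m - 1), ∑ j ∈ range a, f (a + (n - m)) j a := by
  rw [sum_sum_sum_eq_sum_sigma, sum_sum_sum_eq_sum_sigma]
  refine sum_nbij' (fun w => ⟨w.2.2 + (n - w.1), w.2.2, w.2.1⟩)
    (fun w => ⟨w.2.1 + (n - w.1), w.2.2, w.2.1⟩) ?_ ?_ ?_ ?_ ?_ <;>
    rintro ⟨k, j, a⟩ h <;>
    simp only [mem_sigma, mem_Icc, mem_range, mem_Ioc, Sigma.mk.injEq, heq_eq_eq, and_true]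
      at h ⊢
  all_goals first | omega | (congr 1; omega)

lemma sum_Icc_Icc_eq (n : ℕ) (f : ℕ → ℕ → M) :
    ∑ m ∈ Icc 2 (n - 1), ∑ c ∈ Icc 1 (m - 1), f m c
      = ∑ a ∈ Icc 1 (n - 2), ∑ b ∈ Icc 1 (n - a - 1), f (a + b) a := by
  rw [sum_sigma', sum_sigma']
  refine sum_nbij' (fun w => ⟨w.2, w.1 - w.2⟩) (fun w => ⟨w.1 + w.2, w.1⟩) ?_ ?_ ?_ ?_ ?_ <;>
    rintro ⟨m, c⟩ h <;>
    simp only [mem_sigma, mem_Icc, Sigma.mk.injEq, heq_eq_eq, and_true,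
      true_and] at h ⊢
  all_goals first | omega | (congr 1; omega)

end Reindex

section Expansion
variable {A : Type*} [Ring A] (Q : A → A) (lam : ℕ → (ℕ → A) → (ℕ → ZMod 2) → A)

lemma Phi_eq_sum (n : ℕ) (v : ℕ → A) (p : ℕ → ZMod 2) :
    Phi lam n v p = ∑ k ∈ Icc 2 (n - 1), ∑ j ∈ range k,
      sgn (phiSign n k j p) * lam k (insLam lam n k j v p) (insLamPar n k j p) := rfl

/-- `Φ_m` with `λ_k` replaced by `Qλ_k`, including the term `k = 1`. -/
def insertionSum (m : ℕ) (v : ℕ → A) (p : ℕ → ZMod 2) : A :=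
  ∑ k ∈ Icc 1 (m - 1), ∑ j ∈ range k,
    sgn (phiSign m k j p) * Qlam Q lam k (insLam lam m k j v p) (insLamPar m k j p)

/-- The summand `(k, j)` of `Φ_n` with `λ_k` expanded by the recursion; `a` is the arity of the
left factor. -/
def expandTerm (n : ℕ) (v : ℕ → A) (p : ℕ → ZMod 2) (k j a : ℕ) : A :=
  sgn (phiSign n k j p) * (sgn (recSign k a (insLamPar n k j p)) *
    (Qlam Q lam a (insLam lam n k j v p) (insLamPar n k j p) *
      Qlam Q lam (k - a) (fun i => insLam lam n k j v p (a + i))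
        (fun i => insLamPar n k j p (a + i))))

variable {Q lam}

lemma LamRecursion.Phi_eq_neg_sum_expandTerm (hrec : LamRecursion Q lam) (n : ℕ) (v : ℕ → A)
    (p : ℕ → ZMod 2) :
    Phi lam n v p = -((∑ k ∈ Icc 2 (n - 1), ∑ j ∈ range k, ∑ a ∈ Ioc 0 j,
        expandTerm Q lam n v p k j a)
      + ∑ k ∈ Icc 2 (n - 1), ∑ j ∈ range k, ∑ a ∈ Ioc j (k - 1),
        expandTerm Q lam n v p k j a) := by
  rw [Phi_eq_sum]
  simp only [← sum_add_distrib, ← sum_neg_distrib]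
  refine sum_congr rfl fun k hk => sum_congr rfl fun j hj => ?_
  rw [mem_Icc] at hk
  rw [mem_range] at hj
  rw [sum_Ioc_consecutive _ (Nat.zero_le j) (by omega), ← Icc_add_one_left_eq_Ioc, hrec k hk.1,
    mul_neg, mul_sum]
  rfl

lemma insertionSum_eq (Q : A →+ A) {m : ℕ} (hm : 2 ≤ m) (v : ℕ → A) (p : ℕ → ZMod 2) :
    insertionSum Q lam m v p = Q (Phi lam m v p) - lam m v p := by
  have hIcc : Icc 1 (m - 1) = insert 1 (Icc 2 (m - 1)) := by
    ext x; simp only [mem_Icc, mem_insert]; omega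
  have hk1 : sgn (phiSign m 1 0 p) * Qlam Q lam 1 (insLam lam m 1 0 v p) (insLamPar m 1 0 p)
      = -lam m v p := by
    simp [phiSign, psum, sgn_zero, Qlam_one, insLam, insE]
  rw [insertionSum, hIcc, sum_insert (by simp), sum_range_one, hk1, Phi_eq_sum, map_sum,
    neg_add_eq_sub]
  congr 1
  refine sum_congr rfl fun k hk => ?_
  rw [map_sum]
  refine sum_congr rfl fun j _ => ?_
  rw [Q.map_sgn_mul, Qlam_of_two_le _ _ (mem_Icc.mp hk).1]

lemma LamRecursion.expandTerm_add_add (hrec : LamRecursion Q lam) {n a k j : ℕ} (ha : 1 ≤ a)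
    (hj : j < k) (hk : a + k ≤ n - 1) (v : ℕ → A) (p : ℕ → ZMod 2) :
    expandTerm Q lam n v p (a + k) (a + j) a
      = sgn (((n - a : ℕ) : ZMod 2) * psum p a) * (Qlam Q lam a v p *
        (sgn (phiSign (n - a) k j (fun i => p (a + i))) *
          Qlam Q lam k (insLam lam (n - a) k j (fun i => v (a + i)) (fun i => p (a + i)))
            (insLamPar (n - a) k j (fun i => p (a + i))))) := by
  have hl : n - a + 1 - k = n + 1 - (a + k) := by omega
  have hleft : Qlam Q lam a (insLam lam n (a + k) (a + j) v p) (insLamPar n (a + k) (a + j) p)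
      = Qlam Q lam a v p :=
    hrec.Qlam_congr ha (fun i hi => if_pos (by omega)) (fun i hi => if_pos (by omega))
  have hshiftV : (fun i => insLam lam n (a + k) (a + j) v p (a + i))
      = insLam lam (n - a) k j (fun i => v (a + i)) (fun i => p (a + i)) := by
    simp only [insLam, insE_shift, hl, add_assoc]
  have hshiftP : (fun i => insLamPar n (a + k) (a + j) p (a + i))
      = insLamPar (n - a) k j (fun i => p (a + i)) := by
    simp only [insLamPar, insP_shift, hl, add_assoc]
  have hsign : phiSign n (a + k) (a + j) p + recSign (a + k) a (insLamPar n (a + k) (a + j) p)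
      = ((n - a : ℕ) : ZMod 2) * psum p a + phiSign (n - a) k j (fun i => p (a + i)) := by
    rw [phiSign, phiSign, recSign, insLamPar, psum_insP_of_le _ _ _ (by omega), psum_add p a j,
      hl, Nat.add_sub_cancel_left, Nat.cast_sub (show a ≤ n by omega),
      Nat.cast_sub (show a + k ≤ n + 1 by omega)]
    push_cast
    grind
  rw [expandTerm, hleft, hshiftV, hshiftP, Nat.add_sub_cancel_left, ← mul_assoc, ← sgn_add, hsign,
    sgn_add, mul_assoc, (sgn_commute _ (Qlam Q lam a v p)).left_comm]

lemma expandTerm_add_sub {n m a j : ℕ} (hja : j < a) (ham : a < m) (hm : m ≤ n - 1)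
    (v : ℕ → A) (p : ℕ → ZMod 2) :
    expandTerm Q lam n v p (a + (n - m)) j a
      = sgn (recSign n m p + 1) *
        ((sgn (phiSign m a j p) * Qlam Q lam a (insLam lam m a j v p) (insLamPar m a j p)) *
          Qlam Q lam (n - m) (fun i => v (m + i)) (fun i => p (m + i))) := by
  have hl : n + 1 - (a + (n - m)) = m + 1 - a := by omega
  have hleftV : insLam lam n (a + (n - m)) j v p = insLam lam m a j v p := by
    simp only [insLam, hl]
  have hleftP : insLamPar n (a + (n - m)) j p = insLamPar m a j p := by
    simp only [insLamPar, hl]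
  have hrightV : (fun i => insLam lam m a j v p (a + i)) = fun i => v (m + i) := funext fun i =>
    (insE_of_lt v _ _ (by omega)).trans (congrArg v (by omega))
  have hrightP : (fun i => insLamPar m a j p (a + i)) = fun i => p (m + i) := funext fun i =>
    (insP_of_lt p _ _ (by omega)).trans (congrArg p (by omega))
  have hsign : phiSign n (a + (n - m)) j p + recSign (a + (n - m)) a (insLamPar m a j p)
      = recSign n m p + 1 + phiSign m a j p := by
    rw [phiSign, phiSign, recSign, recSign, insLamPar, psum_insP_of_lt p hja (by omega),
      show a + (m + 1 - a) - 1 = m by omega, hl, Nat.add_sub_cancel_left,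
      Nat.cast_sub (show a ≤ m + 1 by omega)]
    push_cast [Nat.cast_sub (show m ≤ n by omega)]
    grind
  rw [expandTerm, hleftV, hleftP, Nat.add_sub_cancel_left, hrightV, hrightP, ← mul_assoc, ← sgn_add,
    hsign, sgn_add, mul_assoc, mul_assoc (sgn (phiSign m a j p))]

end Expansion

section Cancellation
variable {A : Type*} [Ring A] {Q : A → A} {lam : ℕ → (ℕ → A) → (ℕ → ZMod 2) → A}

lemma Qlam_mul_Qlam_mul_Qlam_cancel {n a b : ℕ} (hab : a + b ≤ n) (v : ℕ → A)
    (p : ℕ → ZMod 2) :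
    sgn (((n - a : ℕ) : ZMod 2) * psum p a) * (Qlam Q lam a v p *
      (sgn (recSign (n - a) b (fun i => p (a + i))) *
        (Qlam Q lam b (fun i => v (a + i)) (fun i => p (a + i)) *
          Qlam Q lam (n - a - b) (fun i => v (a + (b + i))) (fun i => p (a + (b + i))))))
    + sgn (recSign n (a + b) p + 1) *
      ((sgn (recSign (a + b) a p) *
          (Qlam Q lam a v p * Qlam Q lam (a + b - a) (fun i => v (a + i)) (fun i => p (a + i)))) *
        Qlam Q lam (n - (a + b)) (fun i => v (a + b + i)) (fun i => p (a + b + i))) = 0 := by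
  have hsign : ((n - a : ℕ) : ZMod 2) * psum p a + recSign (n - a) b (fun i => p (a + i))
      = recSign n (a + b) p + 1 + recSign (a + b) a p + 1 := by
    rw [recSign, recSign, recSign, psum_add, Nat.add_sub_cancel_left]
    push_cast [Nat.cast_sub (show a ≤ n by omega), Nat.cast_sub (show b ≤ n - a by omega),
      Nat.cast_sub hab]
    grind
  simp only [Nat.add_sub_cancel_left, Nat.sub_sub, ← add_assoc]
  rw [(sgn_commute _ (Qlam Q lam a v p)).left_comm, ← mul_assoc (sgn _), ← sgn_add, hsign,
    mul_assoc (sgn (recSign (a + b) a p)), ← mul_assoc (sgn (recSign n (a + b) p + 1)), ← sgn_add,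
    sgn_add _ 1, sgn_one, mul_neg_one, mul_assoc (Qlam Q lam a v p), neg_mul, mul_neg,
    (sgn_commute _ (Qlam Q lam a v p)).left_comm, neg_add_cancel]

lemma LamRecursion.sum_Qlam_mul_lam_add_sum_lam_mul_Qlam (hrec : LamRecursion Q lam) (n : ℕ)
    (v : ℕ → A) (p : ℕ → ZMod 2) :
    ∑ a ∈ Icc 1 (n - 2), sgn (((n - a : ℕ) : ZMod 2) * psum p a) *
        (Qlam Q lam a v p * lam (n - a) (fun i => v (a + i)) (fun i => p (a + i)))
      + ∑ m ∈ Icc 2 (n - 1), sgn (recSign n m p + 1) *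
        (lam m v p * Qlam Q lam (n - m) (fun i => v (m + i)) (fun i => p (m + i))) = 0 := by
  have hleft : ∀ a ∈ Icc 1 (n - 2), sgn (((n - a : ℕ) : ZMod 2) * psum p a) *
      (Qlam Q lam a v p * lam (n - a) (fun i => v (a + i)) (fun i => p (a + i)))
      = -∑ b ∈ Icc 1 (n - a - 1), sgn (((n - a : ℕ) : ZMod 2) * psum p a) * (Qlam Q lam a v p *
        (sgn (recSign (n - a) b (fun i => p (a + i))) *
          (Qlam Q lam b (fun i => v (a + i)) (fun i => p (a + i)) *
            Qlam Q lam (n - a - b) (fun i => v (a + (b + i))) (fun i => p (a + (b + i)))))) :=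
    fun a ha => by
      rw [hrec (n - a) (by simp only [mem_Icc] at ha; omega), mul_neg, mul_neg, mul_sum, mul_sum]
  have hright : ∀ m ∈ Icc 2 (n - 1), sgn (recSign n m p + 1) *
      (lam m v p * Qlam Q lam (n - m) (fun i => v (m + i)) (fun i => p (m + i)))
      = -∑ c ∈ Icc 1 (m - 1), sgn (recSign n m p + 1) *
        ((sgn (recSign m c p) *
            (Qlam Q lam c v p * Qlam Q lam (m - c) (fun i => v (c + i)) (fun i => p (c + i)))) *
          Qlam Q lam (n - m) (fun i => v (m + i)) (fun i => p (m + i))) :=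
    fun m hm => by rw [hrec m (mem_Icc.mp hm).1, neg_mul, mul_neg, sum_mul, mul_sum]
  rw [sum_congr rfl hleft, sum_congr rfl hright, sum_neg_distrib, sum_neg_distrib, sum_Icc_Icc_eq,
    ← neg_add, ← sum_add_distrib, neg_eq_zero]
  refine sum_eq_zero fun a ha => ?_
  rw [← sum_add_distrib]
  refine sum_eq_zero fun b hb => ?_
  simp only [mem_Icc] at ha hb
  exact Qlam_mul_Qlam_mul_Qlam_cancel (by omega) v p

end Cancellation

section Main
variable {A : Type*} [Ring A] {Q : A →+ A} {lam : ℕ → (ℕ → A) → (ℕ → ZMod 2) → A}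

lemma LamRecursion.Phi_eq_neg_sum_Q_Phi (hrec : LamRecursion Q lam) (n : ℕ) (v : ℕ → A)
    (p : ℕ → ZMod 2) :
    Phi lam n v p = -(∑ a ∈ Icc 1 (n - 2), sgn (((n - a : ℕ) : ZMod 2) * psum p a) *
        (Qlam Q lam a v p * Q (Phi lam (n - a) (fun i => v (a + i)) (fun i => p (a + i))))
      + ∑ m ∈ Icc 2 (n - 1), sgn (recSign n m p + 1) *
        (Q (Phi lam m v p) * Qlam Q lam (n - m) (fun i => v (m + i)) (fun i => p (m + i)))) := by
  have hle : ∑ k ∈ Icc 2 (n - 1), ∑ j ∈ range k, ∑ a ∈ Ioc 0 j, expandTerm Q lam n v p k j a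
      = ∑ a ∈ Icc 1 (n - 2), sgn (((n - a : ℕ) : ZMod 2) * psum p a) * (Qlam Q lam a v p *
        (Q (Phi lam (n - a) (fun i => v (a + i)) (fun i => p (a + i)))
          - lam (n - a) (fun i => v (a + i)) (fun i => p (a + i)))) := by
    rw [sum_Icc_range_Ioc_zero_eq]
    refine sum_congr rfl fun a ha => ?_
    rw [mem_Icc] at ha
    rw [← insertionSum_eq Q (by omega), insertionSum, mul_sum, mul_sum]
    refine sum_congr rfl fun k hk => ?_
    rw [mul_sum, mul_sum]
    refine sum_congr rfl fun j hj => ?_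
    rw [mem_Icc] at hk
    exact hrec.expandTerm_add_add ha.1 (mem_range.mp hj) (by omega) v p
  have hgt : ∑ k ∈ Icc 2 (n - 1), ∑ j ∈ range k, ∑ a ∈ Ioc j (k - 1), expandTerm Q lam n v p k j a
      = ∑ m ∈ Icc 2 (n - 1), sgn (recSign n m p + 1) * ((Q (Phi lam m v p) - lam m v p) *
        Qlam Q lam (n - m) (fun i => v (m + i)) (fun i => p (m + i))) := by
    rw [sum_Icc_range_Ioc_eq]
    refine sum_congr rfl fun m hm => ?_
    rw [mem_Icc] at hm
    rw [← insertionSum_eq Q hm.1, insertionSum, sum_mul, mul_sum]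
    refine sum_congr rfl fun a ha => ?_
    rw [sum_mul, mul_sum]
    refine sum_congr rfl fun j hj => ?_
    rw [mem_Icc] at ha
    exact expandTerm_add_sub (mem_range.mp hj) (by omega) hm.2 v p
  rw [hrec.Phi_eq_neg_sum_expandTerm, hle, hgt]
  simp only [mul_sub, sub_mul, sum_sub_distrib]
  rw [sub_add_sub_comm, hrec.sum_Qlam_mul_lam_add_sum_lam_mul_Qlam, sub_zero]

theorem LamRecursion.Phi_eq_zero (hrec : LamRecursion Q lam) (n : ℕ) (v : ℕ → A)
    (p : ℕ → ZMod 2) : Phi lam n v p = 0 := by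
  induction n using Nat.strong_induction_on generalizing v p with
  | _ n IH =>
  rw [hrec.Phi_eq_neg_sum_Q_Phi, sum_eq_zero fun a ha => ?_, sum_eq_zero fun m hm => ?_, add_zero,
    neg_zero]
  · rw [IH m (by simp only [mem_Icc] at hm; omega), map_zero, zero_mul, mul_zero]
  · rw [IH (n - a) (by simp only [mem_Icc] at ha; omega), map_zero, mul_zero, mul_zero]

end Main

theorem phi_eq_zero_general {K A : Type*} [Field K] [Ring A] [Algebra K A]
    -- `Q` is an odd linear operator
    (Q : A →ₗ[K] A)
    -- `λ₂(v₁,v₂) = v₁·v₂` and, recursively, `λ_n(v₁,…,v_n) =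
    -- -∑ (-1)^{k+(l-1)(|v₁|+⋯+|v_k|)} [Qλ_k(v₁,…,v_k)]·[Qλ_l(v_{k+1},…,v_n)]`
    -- for `n ≥ 3`, with `Qλ₁ := -Id`; here the sum runs over all splittings
    -- `(v₁,…,v_k), (v_{k+1},…,v_n)` with `k, l ≥ 1` (so `l = n - k`, matching
    -- the arities in the paper's explicit formulae for `λ₃, λ₄, λ₅`)
    (lam : ℕ → (ℕ → A) → (ℕ → ZMod 2) → A)
    (hlam2 : ∀ (v : ℕ → A) (p : ℕ → ZMod 2), lam 2 v p = v 0 * v 1)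
    (hlamrec : ∀ n, 3 ≤ n → ∀ (v : ℕ → A) (p : ℕ → ZMod 2),
      lam n v p =
        - ∑ k ∈ Finset.Icc 1 (n - 1),
            sgn ((k : ZMod 2) + (((n - k : ℕ) : ZMod 2) - 1) * psum p k) *
              (Qlam (⇑Q) lam k v p *
                Qlam (⇑Q) lam (n - k) (fun i => v (k + i)) (fun i => p (k + i))))
    (n : ℕ) (v : ℕ → A) (p : ℕ → ZMod 2) :
    Phi lam n v p = 0 :=
  (lamRecursion_of_two_of_three_le (Q := Q.toAddMonoidHom) lam hlam2 hlamrec).Phi_eq_zero n v p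

/-- Lemma 1 of Merkulov, "Strong homotopy algebras of a Kähler
manifold": for every `n ≥ 3` and all homogeneous `v₁, …, v_n ∈ V`,
`Φ_n(v₁,…,v_n) = 0`. -/
theorem phi_eq_zero {K A : Type*} [Field K] [Ring A] [Algebra K A]
    -- `A` is a superalgebra over `K`: a ℤ/2-graded associative algebra
    (𝒜 : ZMod 2 → Submodule K A) [GradedAlgebra 𝒜]
    -- `Q` is an odd linear operator
    (Q : A →ₗ[K] A)
    (hQ : ∀ (i : ZMod 2), ∀ x ∈ 𝒜 i, Q x ∈ 𝒜 (i + 1))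
    -- `λ₂(v₁,v₂) = v₁·v₂` and, recursively, `λ_n(v₁,…,v_n) =
    -- -∑ (-1)^{k+(l-1)(|v₁|+⋯+|v_k|)} [Qλ_k(v₁,…,v_k)]·[Qλ_l(v_{k+1},…,v_n)]`
    -- for `n ≥ 3`, with `Qλ₁ := -Id`; here the sum runs over all splittings
    -- `(v₁,…,v_k), (v_{k+1},…,v_n)` with `k, l ≥ 1` (so `l = n - k`, matching
    -- the arities in the paper's explicit formulae for `λ₃, λ₄, λ₅`)
    (lam : ℕ → (ℕ → A) → (ℕ → ZMod 2) → A)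
    (hlam2 : ∀ (v : ℕ → A) (p : ℕ → ZMod 2), lam 2 v p = v 0 * v 1)
    (hlamrec : ∀ n, 3 ≤ n → ∀ (v : ℕ → A) (p : ℕ → ZMod 2),
      lam n v p =
        - ∑ k ∈ Finset.Icc 1 (n - 1),
            sgn ((k : ZMod 2) + (((n - k : ℕ) : ZMod 2) - 1) * psum p k) *
              (Qlam (⇑Q) lam k v p *
                Qlam (⇑Q) lam (n - k) (fun i => v (k + i)) (fun i => p (k + i))))
    (n : ℕ) (hn : 3 ≤ n) (v : ℕ → A) (p : ℕ → ZMod 2)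
    -- `v₁, …, v_n` are homogeneous, `v_i` of parity `p_i`
    (hv : ∀ i < n, v i ∈ 𝒜 (p i)) :
    Phi lam n v p = 0 :=
  phi_eq_zero_general Q lam hlam2 hlamrec n v p
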